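/- arXiv:1104.2397 — 3 statements merged into one kernel-verified Lean document; each statement's English description precedes it below -/
import Mathlib

section
/- Let V : [t0,t1] → ℝ³ be C³ and suppose V''(t) = V'(t) × V(t) + C for all t ∈ [t0,t1], where C ∈ ℝ³ is constant. Then for all t ∈ [t0,t1], ⟨V'''(t), V'(t)⟩ = ⟨C, V''(t)⟩ − ‖V''(t)‖². -/
/-!
Differentiating `V'' = V' × V + C` gives `V''' = V'' × V + V' × V' = V'' × V`. By the cyclic
symmetry of the triple product, `⟨V'' × V, V'⟩ = -⟨V'', V' × V⟩ = -⟨V'', V'' - C⟩`.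
-/

noncomputable section
open scoped RealInnerProductSpace

/-- `ℝ³` with the Euclidean inner product. -/
abbrev E3 : Type := EuclideanSpace ℝ (Fin 3)

/-- The cross product on `ℝ³`; with `⁅u,v⁆ := cross u v`, `ℝ³` is the Lie algebra `so(3)`. -/
def cross (u v : E3) : E3 :=
  (WithLp.equiv 2 (Fin 3 → ℝ)).symm
    ![u 1 * v 2 - u 2 * v 1, u 2 * v 0 - u 0 * v 2, u 0 * v 1 - u 1 * v 0]

open Matrix WithLp

namespace E3

lemma cross_eq_toLp_crossProduct (u v : E3) : cross u v = toLp 2 (ofLp u ⨯₃ ofLp v) := rfl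

lemma cross_self (u : E3) : cross u u = 0 := by
  simp [cross_eq_toLp_crossProduct]

lemma cross_swap (u v : E3) : cross v u = -cross u v := by
  rw [cross_eq_toLp_crossProduct, cross_eq_toLp_crossProduct, ← cross_anticomm, toLp_neg]

lemma inner_cross_left (u v w : E3) : ⟪cross u v, w⟫ = ⟪u, cross v w⟫ := by
  simp only [cross_eq_toLp_crossProduct, EuclideanSpace.inner_eq_star_dotProduct, star_trivial]
  rw [triple_product_permutation, dotProduct_comm]

lemma inner_cross_eq_of_eq_cross_add {a v b C : E3} (hb : b = cross a v + C) :
    ⟪cross b v, a⟫ = ⟪C, b⟫ - ‖b‖ ^ 2 := by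
  have hav : cross a v = b - C := eq_sub_of_add_eq hb.symm
  calc ⟪cross b v, a⟫ = -⟪b, b - C⟫ := by
        rw [inner_cross_left, cross_swap, inner_neg_right, hav]
    _ = ⟪C, b⟫ - ‖b‖ ^ 2 := by
        rw [inner_sub_right, real_inner_self_eq_norm_sq, real_inner_comm]
        ring

def crossCLM : E3 →L[ℝ] E3 →L[ℝ] E3 :=
  LinearMap.toContinuousLinearMap <| LinearMap.toContinuousLinearMap.toLinearMap ∘ₗ
    ((crossProduct.compl₁₂ (WithLp.linearEquiv 2 ℝ (Fin 3 → ℝ)).toLinearMap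
      (WithLp.linearEquiv 2 ℝ (Fin 3 → ℝ)).toLinearMap).compr₂
      (WithLp.linearEquiv 2 ℝ (Fin 3 → ℝ)).symm.toLinearMap)

end E3

theorem HasDerivWithinAt.cross {f g : ℝ → E3} {f' g' : E3} {s : Set ℝ} {x : ℝ}
    (hf : HasDerivWithinAt f f' s x) (hg : HasDerivWithinAt g g' s x) :
    HasDerivWithinAt (fun t => cross (f t) (g t)) (cross (f x) g' + cross f' (g x)) s x :=
  E3.crossCLM.hasDerivWithinAt_of_bilinear hf hg

theorem ContDiffOn.hasDerivWithinAt_iteratedDerivWithin {𝕜 F : Type*} [NontriviallyNormedField 𝕜]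
    [NormedAddCommGroup F] [NormedSpace 𝕜 F] {f : 𝕜 → F} {s : Set 𝕜} {n : WithTop ℕ∞} {m : ℕ}
    (hf : ContDiffOn 𝕜 n f s) (hmn : m < n) (hs : UniqueDiffOn 𝕜 s) {x : 𝕜} (hx : x ∈ s) :
    HasDerivWithinAt (iteratedDerivWithin m f s) (iteratedDerivWithin (m + 1) f s x) s x := by
  rw [iteratedDerivWithin_succ]
  exact (hf.differentiableOn_iteratedDerivWithin hmn hs x hx).hasDerivWithinAt

theorem iteratedDerivWithin_three_eq_cross_of_lieQuadratic {V : ℝ → E3} {C : E3} {s : Set ℝ}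
    (hs : UniqueDiffOn ℝ s) (hV : ContDiffOn ℝ 3 V s)
    (hLQ : ∀ t ∈ s, iteratedDerivWithin 2 V s t = cross (iteratedDerivWithin 1 V s t) (V t) + C)
    {t : ℝ} (ht : t ∈ s) :
    iteratedDerivWithin 3 V s t = cross (iteratedDerivWithin 2 V s t) (V t) := by
  have hV₁ : HasDerivWithinAt V (iteratedDerivWithin 1 V s t) s t := by
    simpa using hV.hasDerivWithinAt_iteratedDerivWithin (m := 0) (by norm_num) hs ht
  have hV₂ := hV.hasDerivWithinAt_iteratedDerivWithin (m := 1) (by norm_num) hs ht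
  have hrhs := (hV₂.cross hV₁).add_const C
  rw [E3.cross_self, zero_add] at hrhs
  rw [iteratedDerivWithin_succ]
  exact (hrhs.congr hLQ (hLQ t ht)).derivWithin (hs t ht)

/-- If a `C³` curve `V : [t0,t1] → ℝ³` satisfies `V'' = V' × V + C` with `C` constant, then
`⟨V''', V'⟩ = ⟨C, V''⟩ − ‖V''‖²` on `[t0,t1]`. -/
theorem stmt_2 (t0 t1 : ℝ) (ht : t0 < t1) (V : ℝ → E3) (C : E3)
    (hV : ContDiffOn ℝ 3 V (Set.Icc t0 t1))
    (hLQ : ∀ t ∈ Set.Icc t0 t1,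
        iteratedDerivWithin 2 V (Set.Icc t0 t1) t =
          cross (iteratedDerivWithin 1 V (Set.Icc t0 t1) t) (V t) + C) :
    ∀ t ∈ Set.Icc t0 t1,
      ⟪iteratedDerivWithin 3 V (Set.Icc t0 t1) t,
          iteratedDerivWithin 1 V (Set.Icc t0 t1) t⟫ =
        ⟪C, iteratedDerivWithin 2 V (Set.Icc t0 t1) t⟫ -
          ‖iteratedDerivWithin 2 V (Set.Icc t0 t1) t‖ ^ 2 := by
  intro t htmem
  rw [iteratedDerivWithin_three_eq_cross_of_lieQuadratic (uniqueDiffOn_Icc ht) hV hLQ htmem]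
  exact E3.inner_cross_eq_of_eq_cross_add (hLQ t htmem)
end
end

section
/- Let V be a variation of Lie quadratics on [t0,t1], fix h ∈ (−1,1), and for each i ≥ 0 set Y_i(t) := V^(i,0)(h,t). Then for every integer n ≥ 1 and all t ∈ [t0,t1]: Y_n'''(t) + V(h,t) × Y_n''(t) − (∂ₜ²V)(h,t) × Y_n(t) = Σ_{i=1}^{n−1} binomial(n,i) · (Y_{n−i}''(t) × Y_i(t)), where all primes denote derivatives in t. -/
noncomputable section
open scoped RealInnerProductSpace

open scoped ContDiff Matrix
open Function

section Aux

def crossLin : E3 →ₗ[ℝ] E3 →ₗ[ℝ] E3 :=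
  ((crossProduct.compl₁₂ (WithLp.linearEquiv 2 ℝ (Fin 3 → ℝ)).toLinearMap
    (WithLp.linearEquiv 2 ℝ (Fin 3 → ℝ)).toLinearMap).compr₂
    (WithLp.linearEquiv 2 ℝ (Fin 3 → ℝ)).symm.toLinearMap)

example (u v : E3) : crossLin u v = cross u v := rfl

def crossL : E3 →L[ℝ] E3 →L[ℝ] E3 :=
  LinearMap.toContinuousLinearMap
    { toFun := fun u => LinearMap.toContinuousLinearMap (crossLin u)
      map_add' := by intro u v; ext w; simp
      map_smul' := by intro c u; ext w; simp }

@[simp] lemma crossL_apply (u v : E3) : crossL u v = cross u v := rfl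

lemma crossE3_anticomm (u v : E3) : cross u v = - cross v u := by
  have h : ∀ a b : Fin 3 → ℝ, crossProduct a b = - (crossProduct b a) := fun a b =>
    (neg_eq_iff_eq_neg.mp (cross_anticomm a b)).symm ▸ rfl
  show crossLin u v = - crossLin v u
  simp only [crossLin, LinearMap.compr₂_apply, LinearMap.compl₁₂_apply, LinearEquiv.coe_coe]
  rw [h, map_neg]

variable {E : Type*} [NormedAddCommGroup E] [NormedSpace ℝ E]

/-- partial derivative in the second variable -/
def pt (F : ℝ → ℝ → E) : ℝ → ℝ → E := fun h t => deriv (F h) t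

/-- partial derivative in the first variable -/
def ph (F : ℝ → ℝ → E) : ℝ → ℝ → E := fun h t => deriv (fun h' => F h' t) h

lemma hasDerivAt_sliceT {f : ℝ × ℝ → E} (hf : Differentiable ℝ f) (h t : ℝ) :
    HasDerivAt (fun s => f (h, s)) (fderiv ℝ f (h, t) (0, 1)) t := by
  have := (hf (h, t)).hasFDerivAt.comp_hasDerivAt t
    ((hasDerivAt_const t h).prodMk (hasDerivAt_id t))
  exact this

lemma hasDerivAt_sliceH {f : ℝ × ℝ → E} (hf : Differentiable ℝ f) (h t : ℝ) :
    HasDerivAt (fun h' => f (h', t)) (fderiv ℝ f (h, t) (1, 0)) h := by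
  have := (hf (h, t)).hasFDerivAt.comp_hasDerivAt h
    ((hasDerivAt_id h).prodMk (hasDerivAt_const h t))
  exact this

variable {F : ℝ → ℝ → E}

lemma pt_eq (hF : ContDiff ℝ ∞ (uncurry F)) (h t : ℝ) :
    pt F h t = fderiv ℝ (uncurry F) (h, t) (0, 1) :=
  (hasDerivAt_sliceT (hF.differentiable (by simp)) h t).deriv

lemma ph_eq (hF : ContDiff ℝ ∞ (uncurry F)) (h t : ℝ) :
    ph F h t = fderiv ℝ (uncurry F) (h, t) (1, 0) :=
  (hasDerivAt_sliceH (hF.differentiable (by simp)) h t).deriv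

lemma contDiff_fderiv_apply (hF : ContDiff ℝ ∞ (uncurry F)) (v : ℝ × ℝ) :
    ContDiff ℝ ∞ (fun p => fderiv ℝ (uncurry F) p v) :=
  (hF.fderiv_right (by norm_cast)).clm_apply contDiff_const

lemma contDiff_uncurry_pt (hF : ContDiff ℝ ∞ (uncurry F)) :
    ContDiff ℝ ∞ (uncurry (pt F)) := by
  have : uncurry (pt F) = fun p : ℝ × ℝ => fderiv ℝ (uncurry F) p (0, 1) := by
    funext p
    exact pt_eq hF p.1 p.2
  rw [this]
  exact contDiff_fderiv_apply hF _

lemma contDiff_uncurry_ph (hF : ContDiff ℝ ∞ (uncurry F)) :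
    ContDiff ℝ ∞ (uncurry (ph F)) := by
  have : uncurry (ph F) = fun p : ℝ × ℝ => fderiv ℝ (uncurry F) p (1, 0) := by
    funext p
    exact ph_eq hF p.1 p.2
  rw [this]
  exact contDiff_fderiv_apply hF _

lemma contDiff_sliceT (hF : ContDiff ℝ ∞ (uncurry F)) (h : ℝ) :
    ContDiff ℝ ∞ (F h) :=
  hF.comp (contDiff_const.prodMk contDiff_id)

lemma contDiff_sliceH (hF : ContDiff ℝ ∞ (uncurry F)) (t : ℝ) :
    ContDiff ℝ ∞ (fun h' => F h' t) :=
  hF.comp (contDiff_id.prodMk contDiff_const)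

lemma deriv_fderiv_apply_T (hF : ContDiff ℝ ∞ (uncurry F)) (v : ℝ × ℝ) (h t : ℝ) :
    deriv (fun s => fderiv ℝ (uncurry F) (h, s) v) t =
      fderiv ℝ (fderiv ℝ (uncurry F)) (h, t) (0, 1) v := by
  have hd : Differentiable ℝ (fun p => fderiv ℝ (uncurry F) p v) :=
    (contDiff_fderiv_apply hF v).differentiable (by simp)
  exact (hasDerivAt_sliceT hd h t).deriv.trans (by
    have hdd : DifferentiableAt ℝ (fderiv ℝ (uncurry F)) (h, t) :=
      ((hF.fderiv_right (m := ∞) (by norm_cast)).differentiable (by simp)) _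
    rw [fderiv_clm_apply hdd (differentiableAt_const v)]
    simp)

lemma deriv_fderiv_apply_H (hF : ContDiff ℝ ∞ (uncurry F)) (v : ℝ × ℝ) (h t : ℝ) :
    deriv (fun h' => fderiv ℝ (uncurry F) (h', t) v) h =
      fderiv ℝ (fderiv ℝ (uncurry F)) (h, t) (1, 0) v := by
  have hd : Differentiable ℝ (fun p => fderiv ℝ (uncurry F) p v) :=
    (contDiff_fderiv_apply hF v).differentiable (by simp)
  exact (hasDerivAt_sliceH hd h t).deriv.trans (by
    have hdd : DifferentiableAt ℝ (fderiv ℝ (uncurry F)) (h, t) :=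
      ((hF.fderiv_right (m := ∞) (by norm_cast)).differentiable (by simp)) _
    rw [fderiv_clm_apply hdd (differentiableAt_const v)]
    simp)

/-- Clairaut -/
lemma pt_ph_comm (hF : ContDiff ℝ ∞ (uncurry F)) (h t : ℝ) :
    pt (ph F) h t = ph (pt F) h t := by
  have h1 : pt (ph F) h t = fderiv ℝ (fderiv ℝ (uncurry F)) (h, t) (0, 1) (1, 0) := by
    have : (ph F) h = fun s => fderiv ℝ (uncurry F) (h, s) (1, 0) := by
      funext s; exact ph_eq hF h s
    show deriv ((ph F) h) t = _
    rw [this]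
    exact deriv_fderiv_apply_T hF _ h t
  have h2 : ph (pt F) h t = fderiv ℝ (fderiv ℝ (uncurry F)) (h, t) (1, 0) (0, 1) := by
    have : (fun h' => pt F h' t) = fun h' => fderiv ℝ (uncurry F) (h', t) (0, 1) := by
      funext h'; exact pt_eq hF h' t
    show deriv (fun h' => pt F h' t) h = _
    rw [this]
    exact deriv_fderiv_apply_H hF _ h t
  rw [h1, h2]
  exact (hF.contDiffAt.isSymmSndFDerivAt (by rw [minSmoothness_of_isRCLikeNormedField]; exact WithTop.coe_le_coe.mpr le_top)).eq _ _

lemma deriv_iteratedDeriv_h (n : ℕ) :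
    ∀ {F : ℝ → ℝ → E}, ContDiff ℝ ∞ (uncurry F) → ∀ (h t : ℝ),
      deriv (fun s => iteratedDeriv n (fun h' => F h' s) h) t =
        iteratedDeriv n (fun h' => deriv (F h') t) h := by
  induction n with
  | zero => intro F hF h t; simp only [iteratedDeriv_zero]
  | succ n IH =>
    intro F hF h t
    have h1 : (fun s => iteratedDeriv (n + 1) (fun h' => F h' s) h) =
        fun s => iteratedDeriv n (fun h' => ph F h' s) h := by
      funext s
      rw [iteratedDeriv_succ']
      rfl
    rw [h1, IH (contDiff_uncurry_ph hF) h t]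
    have h2 : (fun h' => deriv (ph F h') t) = fun h' => deriv (fun h'' => pt F h'' t) h' := by
      funext h'
      exact pt_ph_comm hF h' t
    rw [h2, ← iteratedDeriv_succ']
    rfl

lemma swap_iteratedDeriv (j : ℕ) :
    ∀ {F : ℝ → ℝ → E}, ContDiff ℝ ∞ (uncurry F) → ∀ (n : ℕ) (h t : ℝ),
      iteratedDeriv j (fun s => iteratedDeriv n (fun h' => F h' s) h) t =
        iteratedDeriv n (fun h' => iteratedDeriv j (F h') t) h := by
  induction j with
  | zero => intro F hF n h t; simp only [iteratedDeriv_zero]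
  | succ j IH =>
    intro F hF n h t
    rw [iteratedDeriv_succ']
    have h1 : (deriv fun s => iteratedDeriv n (fun h' => F h' s) h) =
        fun s => iteratedDeriv n (fun h' => pt F h' s) h := by
      funext s
      exact deriv_iteratedDeriv_h n hF h s
    rw [h1, IH (contDiff_uncurry_pt hF) n h t]
    have h2 : (fun h' => iteratedDeriv j (pt F h') t) =
        fun h' => iteratedDeriv (j + 1) (F h') t := by
      funext h'
      rw [iteratedDeriv_succ']
      rfl
    rw [h2]

section Leibniz

variable {Ea Eb Ec : Type*} [NormedAddCommGroup Ea] [NormedSpace ℝ Ea]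
  [NormedAddCommGroup Eb] [NormedSpace ℝ Eb] [NormedAddCommGroup Ec] [NormedSpace ℝ Ec]

lemma contDiff_iteratedDeriv' {f : ℝ → Ea} (hf : ContDiff ℝ ∞ f) (k : ℕ) :
    ContDiff ℝ ∞ (iteratedDeriv k f) := by
  rw [iteratedDeriv_eq_iterate]
  exact hf.iterate_deriv k

lemma hasDerivAt_iteratedDeriv {f : ℝ → Ea} (hf : ContDiff ℝ ∞ f) (k : ℕ) (x : ℝ) :
    HasDerivAt (iteratedDeriv k f) (iteratedDeriv (k + 1) f x) x := by
  rw [iteratedDeriv_succ]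
  exact ((contDiff_iteratedDeriv' hf k).differentiable
    (by simp) x).hasDerivAt

lemma leibniz_iteratedDeriv (B : Ea →L[ℝ] Eb →L[ℝ] Ec) {f : ℝ → Ea} {g : ℝ → Eb}
    (hf : ContDiff ℝ ∞ f) (hg : ContDiff ℝ ∞ g) (n : ℕ) (x : ℝ) :
    iteratedDeriv n (fun y => B (f y) (g y)) x =
      ∑ i ∈ Finset.range (n + 1),
        (n.choose i : ℝ) • B (iteratedDeriv (n - i) f x) (iteratedDeriv i g x) := by
  induction n generalizing x with
  | zero => simp
  | succ n IH =>
    rw [iteratedDeriv_succ]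
    have hcongr : deriv (iteratedDeriv n fun y => B (f y) (g y)) x =
        deriv (fun y => ∑ i ∈ Finset.range (n + 1),
          (n.choose i : ℝ) • B (iteratedDeriv (n - i) f y) (iteratedDeriv i g y)) x := by
      congr 1
      funext y
      exact IH y
    rw [hcongr]
    -- derivative of each term
    have hterm : ∀ i ∈ Finset.range (n + 1), HasDerivAt
        (fun y => (n.choose i : ℝ) • B (iteratedDeriv (n - i) f y) (iteratedDeriv i g y))
        ((n.choose i : ℝ) • (B (iteratedDeriv (n - i + 1) f x) (iteratedDeriv i g x)
          + B (iteratedDeriv (n - i) f x) (iteratedDeriv (i + 1) g x))) x := by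
      intro i _
      have hc : HasDerivAt (fun y => B (iteratedDeriv (n - i) f y))
          (B (iteratedDeriv (n - i + 1) f x)) x :=
        (B.hasFDerivAt).comp_hasDerivAt x (hasDerivAt_iteratedDeriv hf (n - i) x)
      have hu : HasDerivAt (iteratedDeriv i g) (iteratedDeriv (i + 1) g x) x :=
        hasDerivAt_iteratedDeriv hg i x
      have := (hc.clm_apply hu).const_smul ((n.choose i : ℝ))
      convert this using 2
      rfl
    have hsum := HasDerivAt.fun_sum hterm
    rw [hsum.deriv]
    -- algebra
    have split : ∑ i ∈ Finset.range (n + 1),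
        (n.choose i : ℝ) • (B (iteratedDeriv (n - i + 1) f x) (iteratedDeriv i g x)
          + B (iteratedDeriv (n - i) f x) (iteratedDeriv (i + 1) g x)) =
        (∑ i ∈ Finset.range (n + 1),
          (n.choose i : ℝ) • B (iteratedDeriv (n - i + 1) f x) (iteratedDeriv i g x)) +
        ∑ i ∈ Finset.range (n + 1),
          (n.choose i : ℝ) • B (iteratedDeriv (n - i) f x) (iteratedDeriv (i + 1) g x) := by
      rw [← Finset.sum_add_distrib]
      exact Finset.sum_congr rfl fun i _ => smul_add _ _ _
    rw [split]
    -- target: reindex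
    rw [Finset.sum_range_succ' (fun i => (((n+1).choose i : ℝ)) •
      B (iteratedDeriv (n + 1 - i) f x) (iteratedDeriv i g x)) (n + 1)]
    have e1 : ∑ i ∈ Finset.range (n + 1),
        ((n + 1).choose (i + 1) : ℝ) • B (iteratedDeriv (n + 1 - (i + 1)) f x)
          (iteratedDeriv (i + 1) g x) =
        (∑ i ∈ Finset.range (n + 1),
          (n.choose i : ℝ) • B (iteratedDeriv (n - i) f x) (iteratedDeriv (i + 1) g x)) +
        ∑ i ∈ Finset.range (n + 1),
          (n.choose (i + 1) : ℝ) • B (iteratedDeriv (n - i) f x) (iteratedDeriv (i + 1) g x) := by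
      rw [← Finset.sum_add_distrib]
      refine Finset.sum_congr rfl fun i hi => ?_
      have : ((n + 1).choose (i + 1) : ℝ) = (n.choose i : ℝ) + (n.choose (i + 1) : ℝ) := by
        rw [Nat.choose_succ_succ]
        push_cast
        ring
      rw [Nat.succ_sub_succ, this, add_smul]
    have e2 : ∑ i ∈ Finset.range (n + 1),
        (n.choose i : ℝ) • B (iteratedDeriv (n - i + 1) f x) (iteratedDeriv i g x) =
        (∑ i ∈ Finset.range (n + 1),
          (n.choose (i + 1) : ℝ) • B (iteratedDeriv (n - i) f x) (iteratedDeriv (i + 1) g x)) +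
        (n.choose 0 : ℝ) • B (iteratedDeriv (n + 1) f x) (iteratedDeriv 0 g x) := by
      rw [Finset.sum_range_succ' (fun i => (n.choose i : ℝ) •
        B (iteratedDeriv (n - i + 1) f x) (iteratedDeriv i g x)) n]
      congr 1
      · rw [Finset.sum_range_succ]
        simp only [Nat.choose_succ_self, Nat.cast_zero, zero_smul, add_zero]
        refine Finset.sum_congr rfl fun i hi => ?_
        have hi' : i < n := Finset.mem_range.mp hi
        have h3 : n - (i + 1) + 1 = n - i := by omega
        rw [h3]
    rw [e1, e2]
    simp only [Nat.choose_zero_right, Nat.cast_one, one_smul, Nat.sub_zero]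
    abel

end Leibniz

lemma contDiff_uncurry_ptIter {E : Type*} [NormedAddCommGroup E] [NormedSpace ℝ E]
    {F : ℝ → ℝ → E} (hF : ContDiff ℝ ∞ (uncurry F)) (j : ℕ) :
    ContDiff ℝ ∞ (uncurry (pt^[j] F)) := by
  induction j generalizing F with
  | zero => exact hF
  | succ j IH =>
    rw [Function.iterate_succ_apply]
    exact IH (contDiff_uncurry_pt hF)

lemma ptIter_eq {E : Type*} [NormedAddCommGroup E] [NormedSpace ℝ E] (j : ℕ) :
    ∀ (F : ℝ → ℝ → E) (h t : ℝ), pt^[j] F h t = iteratedDeriv j (F h) t := by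
  induction j with
  | zero => intro F h t; simp
  | succ j IH =>
    intro F h t
    rw [Function.iterate_succ_apply, IH (pt F) h t, iteratedDeriv_succ']
    rfl

lemma contDiff_sliceH_iteratedDeriv {E : Type*} [NormedAddCommGroup E] [NormedSpace ℝ E]
    {F : ℝ → ℝ → E} (hF : ContDiff ℝ ∞ (uncurry F)) (j : ℕ) (t : ℝ) :
    ContDiff ℝ ∞ (fun h' => iteratedDeriv j (F h') t) := by
  have : (fun h' => iteratedDeriv j (F h') t) = fun h' => pt^[j] F h' t := by
    funext h'; exact (ptIter_eq j F h' t).symm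
  rw [this]
  exact contDiff_sliceH (contDiff_uncurry_ptIter hF j) t

end Aux


/-- The order-`n` variational equation for a variation `V` of Lie quadratics on `[t0,t1]`:
with `Y_i(t) := ∂ₕⁱV(h,t)`, for `n ≥ 1`,
`Yₙ''' + V(h,t) × Yₙ'' − ∂ₜ²V(h,t) × Yₙ = Σ_{i=1}^{n−1} C(n,i)·(Y_{n−i}'' × Y_i)`. -/
theorem stmt_6 (t0 t1 : ℝ) (ht : t0 < t1) (V : ℝ → ℝ → E3)
    (hV : ContDiff ℝ (⊤ : ℕ∞) (Function.uncurry V))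
    (hLQ : ∀ h ∈ Set.Icc (-1 : ℝ) 1, ∀ t ∈ Set.Icc t0 t1,
        iteratedDeriv 3 (V h) t = cross (iteratedDeriv 2 (V h) t) (V h t))
    (h : ℝ) (hh : h ∈ Set.Ioo (-1 : ℝ) 1) (n : ℕ) (hn : 1 ≤ n) :
    ∀ t ∈ Set.Icc t0 t1,
      iteratedDeriv 3 (fun s => iteratedDeriv n (fun h' => V h' s) h) t +
          cross (V h t)
            (iteratedDeriv 2 (fun s => iteratedDeriv n (fun h' => V h' s) h) t) -
          cross (iteratedDeriv 2 (V h) t) (iteratedDeriv n (fun h' => V h' t) h) =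
        ∑ i ∈ Finset.Ico 1 n,
          (n.choose i : ℝ) •
            cross (iteratedDeriv 2 (fun s => iteratedDeriv (n - i) (fun h' => V h' s) h) t)
              (iteratedDeriv i (fun h' => V h' t) h) := by
  have hV' : ContDiff ℝ ∞ (Function.uncurry V) := hV.of_le (by simp)
  intro t htmem
  set f2 : ℝ → E3 := fun h' => iteratedDeriv 2 (V h') t with hf2
  set f0 : ℝ → E3 := fun h' => V h' t with hf0
  have hsm2 : ContDiff ℝ ∞ f2 := contDiff_sliceH_iteratedDeriv hV' 2 t
  have hsm0 : ContDiff ℝ ∞ f0 := contDiff_sliceH hV' t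
  -- differentiate the Lie quadratic equation n times in h
  have hEqOn : Set.EqOn (fun h' => iteratedDeriv 3 (V h') t)
      (fun h' => crossL (f2 h') (f0 h')) (Set.Ioo (-1 : ℝ) 1) := by
    intro h' hh'
    simp only [crossL_apply]
    exact hLQ h' (Set.Ioo_subset_Icc_self hh') t htmem
  have key : iteratedDeriv n (fun h' => iteratedDeriv 3 (V h') t) h =
      iteratedDeriv n (fun h' => crossL (f2 h') (f0 h')) h :=
    hEqOn.iteratedDeriv_of_isOpen isOpen_Ioo n hh
  -- swap the h- and t-derivatives on the left
  have hswapL : iteratedDeriv 3 (fun s => iteratedDeriv n (fun h' => V h' s) h) t =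
      iteratedDeriv n (fun h' => iteratedDeriv 3 (V h') t) h :=
    swap_iteratedDeriv 3 hV' n h t
  -- Leibniz on the right
  have hleib : iteratedDeriv n (fun h' => crossL (f2 h') (f0 h')) h =
      ∑ i ∈ Finset.range (n + 1),
        (n.choose i : ℝ) • crossL (iteratedDeriv (n - i) f2 h) (iteratedDeriv i f0 h) :=
    leibniz_iteratedDeriv crossL hsm2 hsm0 n h
  -- swap derivatives inside the sum
  have hswapIn : ∀ k : ℕ, iteratedDeriv k f2 h =
      iteratedDeriv 2 (fun s => iteratedDeriv k (fun h' => V h' s) h) t := by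
    intro k
    rw [swap_iteratedDeriv 2 hV' k h t]
  have main : iteratedDeriv 3 (fun s => iteratedDeriv n (fun h' => V h' s) h) t =
      ∑ i ∈ Finset.range (n + 1),
        (n.choose i : ℝ) •
          crossL (iteratedDeriv 2 (fun s => iteratedDeriv (n - i) (fun h' => V h' s) h) t)
            (iteratedDeriv i f0 h) := by
    rw [hswapL, key, hleib]
    exact Finset.sum_congr rfl fun i _ => by rw [hswapIn (n - i)]
  -- peel off the terms i = 0 and i = n
  rw [Finset.sum_range_succ, Finset.range_eq_Ico,
      Finset.sum_eq_sum_Ico_succ_bot (Nat.lt_of_lt_of_le Nat.zero_lt_one hn)] at main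
  have h0 : (n.choose 0 : ℝ) •
      crossL (iteratedDeriv 2 (fun s => iteratedDeriv (n - 0) (fun h' => V h' s) h) t)
        (iteratedDeriv 0 f0 h) =
      - cross (V h t) (iteratedDeriv 2 (fun s => iteratedDeriv n (fun h' => V h' s) h) t) := by
    simp only [Nat.choose_zero_right, Nat.cast_one, one_smul, Nat.sub_zero,
      iteratedDeriv_zero, crossL_apply]
    rw [crossE3_anticomm]
  have hnn : (n.choose n : ℝ) •
      crossL (iteratedDeriv 2 (fun s => iteratedDeriv (n - n) (fun h' => V h' s) h) t)
        (iteratedDeriv n f0 h) =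
      cross (iteratedDeriv 2 (V h) t) (iteratedDeriv n (fun h' => V h' t) h) := by
    simp only [Nat.choose_self, Nat.cast_one, one_smul, Nat.sub_self,
      iteratedDeriv_zero, crossL_apply]
    rfl
  rw [h0, hnn] at main
  have hmid : ∑ i ∈ Finset.Ico 1 n,
      (n.choose i : ℝ) •
        crossL (iteratedDeriv 2 (fun s => iteratedDeriv (n - i) (fun h' => V h' s) h) t)
          (iteratedDeriv i f0 h) =
      ∑ i ∈ Finset.Ico 1 n,
        (n.choose i : ℝ) •
          cross (iteratedDeriv 2 (fun s => iteratedDeriv (n - i) (fun h' => V h' s) h) t)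
            (iteratedDeriv i (fun h' => V h' t) h) :=
    Finset.sum_congr rfl fun i _ => by rw [crossL_apply]
  rw [hmid] at main
  rw [main]
  abel
end
end

section
/- Let F0, F1, F2 be a positively oriented orthonormal basis of ℝ³ (so F0 × F1 = F2, F1 × F2 = F0, F2 × F0 = F1), let d > 0, D := dF0, t0 ∈ ℝ, let c₀, c₁, c₂, a₀₁, a₀₂, a₁₁, a₁₂ ∈ ℝ, and let B ∈ ℝ³ be orthogonal to F0. Define Y₁(t) := (c₀ + c₁(t−t0) + c₂(t−t0)²)F0 + (a₀₁F1 + a₀₂F2) + (t−t0)(a₁₁F1 + a₁₂F2) + cos(d(t−t0))B − sin(d(t−t0))(F0 × B). Then for all t ∈ ℝ: Y₁''(t) − Y₁'(t) × D = 2c₂·F0 − d·a₁₂·F1 + d·a₁₁·F2. Consequently, for any δ, the curve V̂₁ := D + δY₁ satisfies V̂₁''(t) − V̂₁'(t) × V̂₁(t) = δ(2c₂F0 − d a₁₂F1 + d a₁₁F2) − δ²·(Y₁'(t) × Y₁(t)) for all t. -/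
/-!
Write `s = t - t0`, `A = a₁₁F1 + a₁₂F2` and `C = F0 × B`, and split `Y₁` into its polynomial part
and its rotating part `R(s) = cos(ds) B - sin(ds) C`. Since `B × F0 = -C` and, by the triple
product expansion with `‖F0‖ = 1` and `B ⊥ F0`, `C × F0 = B`, the rotating part solves the
homogeneous equation exactly: `R'' = -d² R = R' × D`. The polynomial part contributes
`2c₂F0 - d (A × F0)` since `F0 × F0 = 0`, and the frame relations give `A × F0 = a₁₂F1 - a₁₁F2`.
For `V̂₁ = D + δY₁` bilinearity of `×` gives `V̂₁' × V̂₁ = δ (Y₁' × D) + δ² (Y₁' × Y₁)`.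
-/

noncomputable section
open scoped RealInnerProductSpace

open Matrix

lemma cross_eq_crossProduct (u v : E3) :
    cross u v = WithLp.toLp 2 (WithLp.ofLp u ⨯₃ WithLp.ofLp v) := rfl

lemma cross_add_left (u w v : E3) : cross (u + w) v = cross u v + cross w v := by
  simp [cross_eq_crossProduct]

lemma cross_add_right (u v w : E3) : cross u (v + w) = cross u v + cross u w := by
  simp [cross_eq_crossProduct]

lemma cross_smul_left (a : ℝ) (u v : E3) : cross (a • u) v = a • cross u v := by
  simp [cross_eq_crossProduct]

lemma cross_smul_right (a : ℝ) (u v : E3) : cross u (a • v) = a • cross u v := by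
  simp [cross_eq_crossProduct]

lemma cross_swap (u v : E3) : cross u v = -cross v u := by
  rw [cross_eq_crossProduct, cross_eq_crossProduct, ← WithLp.toLp_neg, cross_anticomm]

lemma cross_self_eq_zero (u : E3) : cross u u = 0 := by
  simp [cross_eq_crossProduct]

lemma cross_cross_eq_inner_smul_sub (u v w : E3) :
    cross (cross u v) w = ⟪u, w⟫ • v - ⟪v, w⟫ • u := by
  simp [cross_eq_crossProduct, cross_cross_eq_smul_sub_smul,
    EuclideanSpace.inner_eq_star_dotProduct, dotProduct_comm]

lemma cross_cross_self_of_inner_eq_zero {u v : E3} (hu : ‖u‖ = 1) (hv : ⟪v, u⟫ = 0) :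
    cross (cross u v) u = v := by
  rw [cross_cross_eq_inner_smul_sub, real_inner_self_eq_norm_sq, hu, hv]
  simp

section Derivatives

variable {𝕜 : Type*} [NontriviallyNormedField 𝕜] {E : Type*} [NormedAddCommGroup E]

lemma iteratedDeriv_two_eq_of_hasDerivAt [NormedSpace 𝕜 E] {f f' f'' : 𝕜 → E}
    (hf : ∀ t, HasDerivAt f (f' t) t) (hf' : ∀ t, HasDerivAt f' (f'' t) t) (t : 𝕜) :
    iteratedDeriv 2 f t = f'' t := by
  rw [iteratedDeriv_succ, iteratedDeriv_one, funext fun t => (hf t).deriv]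
  exact (hf' t).deriv

lemma hasDerivAt_quadratic_smul_add [NormedSpace 𝕜 E] (c₀ c₁ c₂ : 𝕜) (F A₀ A₁ : E) (s : 𝕜) :
    HasDerivAt (fun s => (c₀ + c₁ * s + c₂ * s ^ 2) • F + A₀ + s • A₁)
      ((c₁ + 2 * c₂ * s) • F + A₁) s := by
  have hp : HasDerivAt (fun s => c₀ + c₁ * s + c₂ * s ^ 2) (c₁ + 2 * c₂ * s) s := by
    refine (((hasDerivAt_id' s).const_mul c₁).const_add c₀ |>.add
      (((hasDerivAt_id' s).pow 2).const_mul c₂)).congr_deriv ?_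
    ring
  exact (((hp.smul_const F).add_const A₀).add ((hasDerivAt_id' s).smul_const A₁)).congr_deriv
    (by rw [one_smul])

lemma hasDerivAt_linear_smul_add [NormedSpace 𝕜 E] (c₁ c₂ : 𝕜) (F A₁ : E) (s : 𝕜) :
    HasDerivAt (fun s => (c₁ + 2 * c₂ * s) • F + A₁) ((2 * c₂) • F) s := by
  simpa using ((((hasDerivAt_id' s).const_mul (2 * c₂)).const_add c₁).smul_const F).add_const A₁

lemma hasDerivAt_cos_smul_sub_sin_smul [NormedSpace ℝ E] (d : ℝ) (B C : E) (s : ℝ) :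
    HasDerivAt (fun s => Real.cos (d * s) • B - Real.sin (d * s) • C)
      (-d • (Real.sin (d * s) • B + Real.cos (d * s) • C)) s := by
  have hds : HasDerivAt (fun s => d * s) d s := by simpa using (hasDerivAt_id s).const_mul d
  refine (((Real.hasDerivAt_cos _).comp s hds).smul_const B |>.sub
    (((Real.hasDerivAt_sin _).comp s hds).smul_const C)).congr_deriv ?_
  module

lemma hasDerivAt_sin_smul_add_cos_smul [NormedSpace ℝ E] (d : ℝ) (B C : E) (s : ℝ) :
    HasDerivAt (fun s => Real.sin (d * s) • B + Real.cos (d * s) • C)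
      (d • (Real.cos (d * s) • B - Real.sin (d * s) • C)) s := by
  have hds : HasDerivAt (fun s => d * s) d s := by simpa using (hasDerivAt_id s).const_mul d
  refine (((Real.hasDerivAt_sin _).comp s hds).smul_const B |>.add
    (((Real.hasDerivAt_cos _).comp s hds).smul_const C)).congr_deriv ?_
  module

end Derivatives

lemma iteratedDeriv_two_sub_cross_const_add_smul (D : E3) (δ : ℝ) {Y Y' Y'' : ℝ → E3}
    (hY : ∀ t, HasDerivAt Y (Y' t) t) (hY' : ∀ t, HasDerivAt Y' (Y'' t) t) (t : ℝ) :
    iteratedDeriv 2 (fun s => D + δ • Y s) t -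
        cross (deriv (fun s => D + δ • Y s) t) (D + δ • Y t) =
      δ • (iteratedDeriv 2 Y t - cross (deriv Y t) D) - δ ^ 2 • cross (deriv Y t) (Y t) := by
  have hV : ∀ t, HasDerivAt (fun s => D + δ • Y s) (δ • Y' t) t :=
    fun t => ((hY t).const_smul δ).const_add D
  have hV' : ∀ t, HasDerivAt (fun s => δ • Y' s) (δ • Y'' t) t :=
    fun t => (hY' t).const_smul δ
  rw [iteratedDeriv_two_eq_of_hasDerivAt hV hV', (hV t).deriv,
    iteratedDeriv_two_eq_of_hasDerivAt hY hY', (hY t).deriv, cross_smul_left, cross_add_right,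
    cross_smul_right]
  module

theorem stmt_15_general (F0 F1 F2 : E3)
    (hn0 : ‖F0‖ = 1)
    (h01 : cross F0 F1 = F2) (h20 : cross F2 F0 = F1)
    (d : ℝ) (t0 c₀ c₁ c₂ a01 a02 a11 a12 : ℝ)
    (B : E3) (hB : ⟪B, F0⟫ = 0)
    (Y₁ : ℝ → E3)
    (hY₁ : ∀ t : ℝ,
        Y₁ t = (c₀ + c₁ * (t - t0) + c₂ * (t - t0) ^ 2) • F0 + (a01 • F1 + a02 • F2) +
            (t - t0) • (a11 • F1 + a12 • F2) +
            Real.cos (d * (t - t0)) • B - Real.sin (d * (t - t0)) • cross F0 B) :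
    (∀ t : ℝ,
        iteratedDeriv 2 Y₁ t - cross (deriv Y₁ t) (d • F0) =
          (2 * c₂) • F0 - (d * a12) • F1 + (d * a11) • F2) ∧
      ∀ δ t : ℝ,
        iteratedDeriv 2 (fun s => d • F0 + δ • Y₁ s) t -
            cross (deriv (fun s => d • F0 + δ • Y₁ s) t) (d • F0 + δ • Y₁ t) =
          δ • ((2 * c₂) • F0 - (d * a12) • F1 + (d * a11) • F2) -
            (δ ^ 2) • cross (deriv Y₁ t) (Y₁ t) := by
  set A := a11 • F1 + a12 • F2
  set C := cross F0 B
  have hY : Y₁ = fun t => ((c₀ + c₁ * (t - t0) + c₂ * (t - t0) ^ 2) • F0 + (a01 • F1 + a02 • F2)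
      + (t - t0) • A) + (Real.cos (d * (t - t0)) • B - Real.sin (d * (t - t0)) • C) :=
    funext fun t => by rw [hY₁, add_sub_assoc]
  have hY' (t : ℝ) : HasDerivAt Y₁ (((c₁ + 2 * c₂ * (t - t0)) • F0 + A) +
      -d • (Real.sin (d * (t - t0)) • B + Real.cos (d * (t - t0)) • C)) t :=
    hY ▸ ((hasDerivAt_quadratic_smul_add _ _ _ _ _ _ _).add
      (hasDerivAt_cos_smul_sub_sin_smul _ _ _ _)).comp_sub_const t t0
  have hY'' (t : ℝ) : HasDerivAt (fun t => ((c₁ + 2 * c₂ * (t - t0)) • F0 + A) +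
      -d • (Real.sin (d * (t - t0)) • B + Real.cos (d * (t - t0)) • C))
      ((2 * c₂) • F0 + -d • (d • (Real.cos (d * (t - t0)) • B - Real.sin (d * (t - t0)) • C))) t :=
    ((hasDerivAt_linear_smul_add _ _ _ _ _).add
      ((hasDerivAt_sin_smul_add_cos_smul _ _ _ _).const_smul (-d))).comp_sub_const t t0
  have hBF : cross B F0 = -C := cross_swap B F0
  have hCF : cross C F0 = B := cross_cross_self_of_inner_eq_zero hn0 hB
  have hAF : cross A F0 = a12 • F1 - a11 • F2 := by
    rw [cross_add_left, cross_smul_left, cross_smul_left, cross_swap F1, h01, h20]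
    module
  have hresidual (t : ℝ) : iteratedDeriv 2 Y₁ t - cross (deriv Y₁ t) (d • F0) =
      (2 * c₂) • F0 - (d * a12) • F1 + (d * a11) • F2 := by
    rw [iteratedDeriv_two_eq_of_hasDerivAt hY' hY'', (hY' t).deriv]
    simp only [cross_add_left, cross_smul_left, cross_smul_right, cross_self_eq_zero, hAF, hBF,
      hCF]
    module
  refine ⟨hresidual, fun δ t => ?_⟩
  rw [iteratedDeriv_two_sub_cross_const_add_smul _ _ hY' hY'', hresidual]

/-- For the general solution `Y₁` of the first variational equation along `D = d·F0`,
one has `Y₁'' − Y₁' × D = 2c₂·F0 − d·a₁₂·F1 + d·a₁₁·F2` (a constant), and hence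
`V̂₁ := D + δY₁` satisfies
`V̂₁'' − V̂₁' × V̂₁ = δ(2c₂F0 − d a₁₂F1 + d a₁₁F2) − δ²·(Y₁' × Y₁)`. -/
theorem stmt_15 (F0 F1 F2 : E3)
    (hn0 : ‖F0‖ = 1) (hn1 : ‖F1‖ = 1) (hn2 : ‖F2‖ = 1)
    (h01 : cross F0 F1 = F2) (h12 : cross F1 F2 = F0) (h20 : cross F2 F0 = F1)
    (d : ℝ) (hd : 0 < d) (t0 c₀ c₁ c₂ a01 a02 a11 a12 : ℝ)
    (B : E3) (hB : ⟪B, F0⟫ = 0)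
    (Y₁ : ℝ → E3)
    (hY₁ : ∀ t : ℝ,
        Y₁ t = (c₀ + c₁ * (t - t0) + c₂ * (t - t0) ^ 2) • F0 + (a01 • F1 + a02 • F2) +
            (t - t0) • (a11 • F1 + a12 • F2) +
            Real.cos (d * (t - t0)) • B - Real.sin (d * (t - t0)) • cross F0 B) :
    (∀ t : ℝ,
        iteratedDeriv 2 Y₁ t - cross (deriv Y₁ t) (d • F0) =
          (2 * c₂) • F0 - (d * a12) • F1 + (d * a11) • F2) ∧
      ∀ δ t : ℝ,
        iteratedDeriv 2 (fun s => d • F0 + δ • Y₁ s) t -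
            cross (deriv (fun s => d • F0 + δ • Y₁ s) t) (d • F0 + δ • Y₁ t) =
          δ • ((2 * c₂) • F0 - (d * a12) • F1 + (d * a11) • F2) -
            (δ ^ 2) • cross (deriv Y₁ t) (Y₁ t) :=
  stmt_15_general F0 F1 F2 hn0 h01 h20 d t0 c₀ c₁ c₂ a01 a02 a11 a12 B hB Y₁ hY₁
end
end
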